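/- 256/(9π) = 9 + 2∑_{n=1}^∞ ((1/2)_n)^2/((n+2)((n+1)!)^2). -/

import Mathlib

open Real Filter Topology

noncomputable def rising (x : ℝ) (n : ℕ) : ℝ := ∏ i ∈ Finset.range n, (x + i)

lemma rising_succ (x : ℝ) (n : ℕ) : rising x (n+1) = rising x n * (x + n) :=
  Finset.prod_range_succ _ _

lemma rising_half_pos (n : ℕ) : 0 < rising (1/2) n := by
  apply Finset.prod_pos; intro i _; positivity

noncomputable def Wal (k : ℕ) : ℝ :=
  ∏ i ∈ Finset.range k, ((2 : ℝ) * i + 2) / (2 * i + 1) * ((2 * i + 2) / (2 * i + 3))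

lemma Wal_pos (k : ℕ) : 0 < Wal k := by
  apply Finset.prod_pos; intro i _
  have h1 : (0:ℝ) < 2*(i:ℝ)+1 := by positivity
  have h3 : (0:ℝ) < 2*(i:ℝ)+3 := by positivity
  have h2 : (0:ℝ) < 2*(i:ℝ)+2 := by positivity
  positivity

noncomputable def s (n : ℕ) : ℝ :=
  (128*(n:ℝ)^2 + 160*(n:ℝ) + 36) * (rising (1/2) n)^2
    / (9*((n:ℝ)+1)*((n.factorial : ℝ))^2)

lemma key (n : ℕ) :
    (rising (1/2) n)^2 * (2*(n:ℝ)+1) * Wal n = ((n.factorial : ℝ))^2 := by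
  induction n with
  | zero => simp [rising, Wal]
  | succ n ih =>
    have h1 : (2*(n:ℝ)+1) ≠ 0 := by positivity
    have h3 : (2*(n:ℝ)+3) ≠ 0 := by positivity
    have expand : (rising (1/2) (n+1))^2 * (2*((n:ℝ)+1)+1) * Wal (n+1)
        = (rising (1/2) n)^2 * (2*(n:ℝ)+1) * Wal n * ((n:ℝ)+1)^2 := by
      rw [rising_succ, show Wal (n+1) = Wal n * (((2 : ℝ) * n + 2) / (2 * n + 1)
        * ((2 * n + 2) / (2 * n + 3))) from Finset.prod_range_succ _ _]
      field_simp
      ring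
    rw [show ((n:ℕ)+1 : ℕ) = n+1 from rfl, Nat.factorial_succ]
    push_cast
    push_cast at expand
    rw [expand, ih]
    ring

lemma s_eq (n : ℕ) :
    s n = (128*(n:ℝ)^2 + 160*(n:ℝ) + 36) / (9*((n:ℝ)+1)*(2*(n:ℝ)+1)) * (Wal n)⁻¹ := by
  have hk := key n
  have hr : (rising (1/2) n) ≠ 0 := (rising_half_pos n).ne'
  have hw : Wal n ≠ 0 := (Wal_pos n).ne'
  have h1 : (2*(n:ℝ)+1) ≠ 0 := by positivity
  have h2 : ((n:ℝ)+1) ≠ 0 := by positivity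
  have hf : ((n.factorial : ℝ)) ≠ 0 := by
    exact_mod_cast (Nat.factorial_pos n).ne'
  rw [s, ← hk]
  field_simp

lemma tendsto_s : Tendsto s atTop (𝓝 (128/(9*π))) := by
  have hA : Tendsto (fun x : ℝ =>
      (128*x^2 + 160*x + 36) / (9*(x+1)*(2*x+1))) atTop (𝓝 (64/9)) := by
    have hc : ContinuousAt (fun y : ℝ => (128+160*y+36*y^2)/(9*(1+y)*(2+y))) 0 := by
      apply ContinuousAt.div
      · fun_prop
      · fun_prop
      · norm_num
    have h0 := hc.tendsto.comp tendsto_inv_atTop_zero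
    simp only [Function.comp_def] at h0
    have h0' : ((128:ℝ)+160*0+36*0^2)/(9*(1+0)*(2+0)) = 64/9 := by norm_num
    rw [h0'] at h0
    refine h0.congr' ?_
    filter_upwards [eventually_gt_atTop (0:ℝ)] with x hx
    have hx' : x ≠ 0 := hx.ne'
    field_simp
  have hAn : Tendsto (fun n : ℕ =>
      (128*(n:ℝ)^2 + 160*(n:ℝ) + 36) / (9*((n:ℝ)+1)*(2*(n:ℝ)+1))) atTop (𝓝 (64/9)) :=
    hA.comp tendsto_natCast_atTop_atTop
  have hB : Tendsto (fun n : ℕ => (Wal n)⁻¹) atTop (𝓝 (π/2)⁻¹) := by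
    have := Real.tendsto_prod_pi_div_two
    exact this.inv₀ (by positivity)
  have hmul := hAn.mul hB
  have hval : (64:ℝ)/9 * (π/2)⁻¹ = 128/(9*π) := by
    have hp : π ≠ 0 := pi_ne_zero
    field_simp
    ring
  rw [hval] at hmul
  exact hmul.congr (fun n => (s_eq n).symm)

lemma telescope (n : ℕ) :
    (rising (1/2) (n + 1)) ^ 2 / (((n:ℝ) + 3) * ((n + 2).factorial : ℝ) ^ 2)
      = s (n+2) - s (n+1) := by
  have hrs : rising (1/2) (n+2) = rising (1/2) (n+1) * (1/2 + ((n:ℝ)+1)) := by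
    rw [show n+2 = (n+1)+1 from rfl, rising_succ]; push_cast; ring_nf
  have hfac : (((n+2).factorial : ℝ)) = ((n:ℝ)+2) * ((n+1).factorial : ℝ) := by
    rw [show n+2 = (n+1)+1 from rfl, Nat.factorial_succ]; push_cast; ring
  have hf1 : (((n+1).factorial : ℝ)) ≠ 0 := by
    exact_mod_cast (Nat.factorial_pos (n+1)).ne'
  have h1 : ((n:ℝ)+1) ≠ 0 := by positivity
  have h2 : ((n:ℝ)+2) ≠ 0 := by positivity
  have h3 : ((n:ℝ)+3) ≠ 0 := by positivity
  rw [s, s, hrs, hfac]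
  push_cast
  field_simp
  ring

lemma sum_range (N : ℕ) :
    ∑ n ∈ Finset.range N,
      (rising (1/2) (n + 1)) ^ 2 / (((n:ℝ) + 3) * ((n + 2).factorial : ℝ) ^ 2)
      = s (N+1) - s 1 := by
  induction N with
  | zero => simp
  | succ N ih =>
    rw [Finset.sum_range_succ, ih, telescope]
    ring

lemma s_one : s 1 = 9/2 := by
  have : rising (1/2) 1 = 1/2 := by
    rw [rising, Finset.prod_range_one]; norm_num
  rw [s, this]
  norm_num

theorem stmt7 :
    256 / (9 * π) = 9 + 2 * ∑' n : ℕ,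
      (rising (1/2) (n + 1)) ^ 2 / ((n + 3) * ((n + 2).factorial : ℝ) ^ 2) := by
  have hnn : ∀ n : ℕ,
      0 ≤ (rising (1/2) (n + 1)) ^ 2 / (((n:ℝ) + 3) * ((n + 2).factorial : ℝ) ^ 2) := by
    intro n
    apply div_nonneg (sq_nonneg _)
    have : (0:ℝ) < ((n + 2).factorial : ℝ) := by exact_mod_cast Nat.factorial_pos _
    positivity
  have hs : HasSum (fun n : ℕ =>
      (rising (1/2) (n + 1)) ^ 2 / (((n:ℝ) + 3) * ((n + 2).factorial : ℝ) ^ 2))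
      (128/(9*π) - 9/2) := by
    rw [hasSum_iff_tendsto_nat_of_nonneg hnn]
    have h1 : Tendsto (fun N : ℕ => s (N+1)) atTop (𝓝 (128/(9*π))) :=
      tendsto_s.comp (tendsto_add_atTop_nat 1)
    have h2 := h1.sub_const (s 1)
    rw [s_one] at h2
    exact h2.congr fun N => by rw [sum_range N, s_one]
  rw [hs.tsum_eq]
  have hp : π ≠ 0 := pi_ne_zero
  field_simp
  ring
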